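/- Let M be a simple matroid on the ground set {1,...,n}. Then the NBC sets of the contraction M/n are exactly the subsets X of {1,...,n-1} such that X ∪ {n} is an NBC set of M. -/

import Mathlib

open Set

/-- A circuit of a matroid: a minimal dependent set. -/
def IsCircuit {α : Type*} (M : Matroid α) (C : Set α) : Prop :=
  M.Dep C ∧ ∀ D, D ⊂ C → ¬ M.Dep D

/-- A broken circuit: a circuit `C` with `|C| > 1` with its minimum element removed. -/
def BrokenCircuit {α : Type*} [LinearOrder α] (M : Matroid α) (B : Set α) : Prop :=
  ∃ C m, IsCircuit M C ∧ m ∈ C ∧ (∀ y ∈ C, m ≤ y) ∧ (C \ {m}).Nonempty ∧ B = C \ {m}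

/-- A no-broken-circuit (NBC) set: an independent set containing no broken circuit. -/
def NBC {α : Type*} [LinearOrder α] (M : Matroid α) (X : Set α) : Prop :=
  M.Indep X ∧ ∀ B, BrokenCircuit M B → ¬ B ⊆ X

/-!
Identify `N` with `M ／ {n}`. If `C \ {m}` is a broken circuit of `M` inside `X ∪ {n}`, then
`m ≠ n` because `n` is the maximum, so `C \ {n}` is dependent in `N` and contains a circuit `D`
of `N`. By simplicity `D` has at least two elements, and `min D ≥ min C`, so
`D \ {min D} ⊆ C \ {m, n} ⊆ X` is a broken circuit of `N` inside `X`. Conversely, a circuit `D`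
of `N` lies in a circuit `C ⊆ D ∪ {n}` of `M` with the same minimum, so a broken circuit of `N`
inside `X` gives one of `M` inside `X ∪ {n}`.
-/

theorem isCircuit_iff_matroid_isCircuit {α : Type*} {M : Matroid α} {C : Set α} :
    IsCircuit M C ↔ M.IsCircuit C := by
  rw [Matroid.isCircuit_iff_forall_ssubset, IsCircuit]
  refine and_congr_right fun hC ↦ forall₂_congr fun D hDC ↦ ?_
  exact Matroid.not_dep_iff (hDC.subset.trans hC.subset_ground)

theorem brokenCircuit_iff {α : Type*} [LinearOrder α] {M : Matroid α} {B : Set α} :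
    BrokenCircuit M B ↔ ∃ C m, M.IsCircuit C ∧ m ∈ C ∧ (∀ y ∈ C, m ≤ y) ∧
      (C \ {m}).Nonempty ∧ B = C \ {m} := by
  simp only [BrokenCircuit, isCircuit_iff_matroid_isCircuit]

namespace Matroid

theorem IsCircuit.nontrivial_of_contractElem {α : Type*} {M : Matroid α} {C : Set α} {e : α}
    (he : M.IsNonloop e) (hpair : ∀ x ∈ M.E, x ≠ e → M.Indep {e, x})
    (hC : (M ／ {e}).IsCircuit C) : C.Nontrivial := by
  refine (hC.nonempty.exists_eq_singleton_or_nontrivial).resolve_left ?_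
  rintro ⟨a, rfl⟩
  obtain ⟨haE, hae⟩ : a ∈ M.E ∧ a ≠ e := by simpa using hC.subset_ground
  exact hC.not_indep (he.contractElem_indep_iff.2 ⟨by simpa using hae.symm, hpair a haE hae⟩)

end Matroid

theorem sdiff_min_subset_sdiff_min {α : Type*} [PartialOrder α] {C C' : Set α} {m m' : α}
    (hC'C : C' ⊆ C) (hmin : ∀ y ∈ C, m ≤ y) (hm' : m' ∈ C') (hmin' : ∀ y ∈ C', m' ≤ y) :
    C' \ {m'} ⊆ C \ {m} := by
  rintro x ⟨hxC', hxm'⟩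
  refine ⟨hC'C hxC', fun hxm ↦ hxm' ?_⟩
  rw [mem_singleton_iff] at hxm ⊢
  subst hxm
  exact le_antisymm (hmin m' (hC'C hm')) (hmin' x hxC')

section NBC

open Matroid

variable {α : Type*} [LinearOrder α] {M : Matroid α} {e : α} {X : Set α}

theorem NBC.insert_of_contractElem (hE : M.E.Finite) (hmax : ∀ y ∈ M.E, y ≤ e)
    (he : M.IsNonloop e) (hpair : ∀ x ∈ M.E, x ≠ e → M.Indep {e, x})
    (hX : NBC (M ／ {e}) X) : NBC M (insert e X) := by
  obtain ⟨-, hI⟩ := he.contractElem_indep_iff.1 hX.1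
  refine ⟨hI, fun B hB hBX ↦ ?_⟩
  obtain ⟨C, m, hC, hmC, hmin, ⟨y, hyC, hym⟩, rfl⟩ := brokenCircuit_iff.1 hB
  have hme : m ≠ e := by
    rintro rfl
    exact hym (le_antisymm (hmax y (hC.subset_ground hyC)) (hmin y hyC))
  obtain ⟨D, hDC, hD⟩ :=
    (hC.contract_dep_of_not_subset (C := {e}) fun h ↦ hme (h hmC)).exists_isCircuit_subset
  have hDnt := hD.nontrivial_of_contractElem he hpair
  obtain ⟨m', hm'D, hmin'⟩ :=
    exists_min_image D id (hE.subset (hD.subset_ground.trans sdiff_subset)) hDnt.nonempty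
  refine hX.2 (D \ {m'})
    (brokenCircuit_iff.2 ⟨D, m', hD, hm'D, hmin', (hDnt.exists_ne m').imp fun _ ↦ id, rfl⟩) ?_
  intro x hx
  exact (hBX (sdiff_min_subset_sdiff_min (hDC.trans sdiff_subset) hmin hm'D hmin' hx)).resolve_left
    (hDC hx.1).2

theorem NBC.contractElem_of_insert (hmax : ∀ y ∈ M.E, y ≤ e) (he : M.IsNonloop e) (heX : e ∉ X)
    (hX : NBC M (insert e X)) : NBC (M ／ {e}) X := by
  refine ⟨he.contractElem_indep_iff.2 ⟨heX, hX.1⟩, fun B hB hBX ↦ ?_⟩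
  obtain ⟨C', m, hC', hmC', hmin, hne, rfl⟩ := brokenCircuit_iff.1 hB
  obtain ⟨C, hC, hC'C, hCC'⟩ := hC'.exists_subset_isCircuit_of_contract
  have hminC : ∀ y ∈ C, m ≤ y := fun y hy ↦ (hCC' hy).elim (hmin y) fun hye ↦
    (mem_singleton_iff.1 hye) ▸ hmax m (hC'.subset_ground hmC').1
  refine hX.2 (C \ {m}) (brokenCircuit_iff.2
    ⟨C, m, hC, hC'C hmC', hminC, hne.mono (sdiff_subset_sdiff_left hC'C), rfl⟩) ?_
  rintro x ⟨hxC, hxm⟩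
  rcases hCC' hxC with hxC' | rfl
  · exact mem_insert_of_mem _ (hBX ⟨hxC', hxm⟩)
  · exact mem_insert x X

end NBC

/-- For a simple matroid `M` on a linearly ordered finite ground set with maximum
element `n`, the NBC sets of the contraction `M/n` (here `N`, characterized by its
ground set and independent sets) are exactly the subsets `X` of `M.E \ {n}` such
that `X ∪ {n}` is an NBC set of `M`. -/
theorem nbc_contract_top {α : Type*} [LinearOrder α] (M : Matroid α)
    (hE : M.E.Finite)
    (hsimple : (∀ x ∈ M.E, M.Indep {x}) ∧
      ∀ x ∈ M.E, ∀ y ∈ M.E, x ≠ y → M.Indep {x, y})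
    (n : α) (hnE : n ∈ M.E) (hn : ∀ y ∈ M.E, y ≤ n)
    (N : Matroid α) (hNE : N.E = M.E \ {n})
    (hNI : ∀ I, N.Indep I ↔ n ∉ I ∧ M.Indep (insert n I)) :
    ∀ X, NBC N X ↔ X ⊆ M.E \ {n} ∧ NBC M (insert n X) := by
  have he : M.IsNonloop n := Matroid.indep_singleton.1 (hsimple.1 n hnE)
  obtain rfl : N = M.contract {n} :=
    Matroid.ext_indep hNE fun I _ ↦ by rw [hNI, he.contractElem_indep_iff]
  intro X
  exact ⟨fun hX ↦ ⟨hX.1.subset_ground,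
      hX.insert_of_contractElem hE hn he fun x hx hxn ↦ hsimple.2 n hnE x hx hxn.symm⟩,
    fun ⟨hXE, hX⟩ ↦ hX.contractElem_of_insert hn he fun hnX ↦ (hXE hnX).2 rfl⟩
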